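/- arXiv:1911.02074 — 8 statements merged into one kernel-verified Lean document; each statement's English description precedes it below -/
import Mathlib

section
/- Let d ≥ 1, let h : {−1,1}^d → ℝ satisfy 0 ≤ h(y) ≤ d for all y, and let M ≥ 2d. Define f : ℝ^d → ℝ by f(x) = min(M, h(round(x)) + 2M·g(x)). Then f is continuous on ℝ^d and is 2M-Lipschitz: |f(x) − f(x')| ≤ 2M‖x − x'‖ for all x, x' ∈ ℝ^d. -/
/-!
Write `v = round x`, `v' = round x'` and `δ = ‖x - x'‖`. If `v = v'`, the two values of `f` are
`min M (h v + 2M·t)` at `t = g x` and `t = g x'`, which differ by at most `2M·|g x - g x'| ≤ 2M·δ`.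
If `v ≠ v'`, some coordinate of `x` has the sign opposite to `v'`, so `1 ≤ ‖x - v'‖ ≤ g x' + δ`;
as `f x ≤ M` and `f x' ≥ min M (2M·g x')` (because `h ≥ 0`), this gives `f x - f x' ≤ 2M·δ`.
-/

open Real MeasureTheory

/-- The coordinatewise sign vector: `round(x)_i = 1` if `x_i ≥ 0` and `-1` otherwise. -/
noncomputable def rnd {d : ℕ} (x : EuclideanSpace ℝ (Fin d)) : EuclideanSpace ℝ (Fin d) :=
  WithLp.toLp 2 (fun i => if 0 ≤ x i then (1 : ℝ) else -1)

/-- The continuous extension `f(x) = min(M, h(round x) + 2M·‖x - round x‖)` of a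
function `h` on the hypercube vertices. -/
noncomputable def fExt {d : ℕ} (h : EuclideanSpace ℝ (Fin d) → ℝ) (M : ℝ)
    (x : EuclideanSpace ℝ (Fin d)) : ℝ :=
  min M (h (rnd x) + 2 * M * ‖x - rnd x‖)

lemma rnd_apply_eq_one_or_eq_neg_one {d : ℕ} (x : EuclideanSpace ℝ (Fin d)) (i : Fin d) :
    rnd x i = 1 ∨ rnd x i = -1 := by
  by_cases hx : 0 ≤ x i <;> simp [rnd, hx]

lemma one_le_norm_sub_of_rnd_ne {d : ℕ} {x x' : EuclideanSpace ℝ (Fin d)} (hne : rnd x ≠ rnd x') :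
    1 ≤ ‖x - rnd x'‖ := by
  obtain ⟨i, hi⟩ : ∃ i, rnd x i ≠ rnd x' i := by
    by_contra! hcon
    exact hne (WithLp.ofLp_injective 2 (funext hcon))
  have hcoord : 1 ≤ |x i - rnd x' i| := by
    by_cases hx : 0 ≤ x i <;> by_cases hx' : 0 ≤ x' i <;>
      simp only [rnd, PiLp.toLp_apply, hx, hx', if_true, if_false, ne_eq, not_true_eq_false] at hi ⊢
    · rw [sub_neg_eq_add, abs_of_nonneg (by linarith)]; linarith
    · rw [abs_of_neg (by linarith)]; linarith
  calc 1 ≤ |x i - rnd x' i| := hcoord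
    _ ≤ ‖x - rnd x'‖ := PiLp.norm_apply_le (x - rnd x') i

lemma min_add_le_min_add {a t : ℝ} (M : ℝ) (ht : 0 ≤ t) : min M (a + t) ≤ min M a + t :=
  calc min M (a + t) ≤ min (M + t) (a + t) := min_le_min_right _ (le_add_of_nonneg_right ht)
    _ = min M a + t := min_add_add_right M a t

lemma fExt_le_add {d : ℕ} {h : EuclideanSpace ℝ (Fin d) → ℝ}
    (hh : ∀ y : EuclideanSpace ℝ (Fin d), (∀ i, y i = 1 ∨ y i = -1) → 0 ≤ h y)
    {M : ℝ} (hM : 0 ≤ M) (x x' : EuclideanSpace ℝ (Fin d)) :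
    fExt h M x ≤ fExt h M x' + 2 * M * ‖x - x'‖ := by
  have hδ : 0 ≤ 2 * M * ‖x - x'‖ := by positivity
  have htri : ‖x - rnd x'‖ ≤ ‖x' - rnd x'‖ + ‖x - x'‖ := by
    simpa [add_comm] using norm_sub_le_norm_sub_add_norm_sub x x' (rnd x')
  by_cases hv : rnd x = rnd x'
  · calc fExt h M x = min M (h (rnd x') + 2 * M * ‖x - rnd x'‖) := by rw [fExt, hv]
      _ ≤ min M (h (rnd x') + 2 * M * ‖x' - rnd x'‖ + 2 * M * ‖x - x'‖) := by
          rw [add_assoc, ← mul_add]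
          gcongr
      _ ≤ fExt h M x' + 2 * M * ‖x - x'‖ := min_add_le_min_add M hδ
  · have hfar := one_le_norm_sub_of_rnd_ne hv
    have hx'_lower : min M (2 * M * ‖x' - rnd x'‖) ≤ fExt h M x' :=
      min_le_min_left M (le_add_of_nonneg_left (hh _ (rnd_apply_eq_one_or_eq_neg_one x')))
    calc fExt h M x ≤ M := min_le_left _ _
      _ ≤ min M (2 * M * ‖x' - rnd x'‖) + 2 * M * ‖x - x'‖ := by
          rcases min_cases M (2 * M * ‖x' - rnd x'‖) with ⟨hmin, -⟩ | ⟨hmin, -⟩ <;>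
            rw [hmin] <;> nlinarith
      _ ≤ fExt h M x' + 2 * M * ‖x - x'‖ := by gcongr

theorem extension_continuous_lipschitz_general (d : ℕ)
    (h : EuclideanSpace ℝ (Fin d) → ℝ)
    (hh : ∀ y : EuclideanSpace ℝ (Fin d), (∀ i, y i = 1 ∨ y i = -1) →
      0 ≤ h y ∧ h y ≤ (d : ℝ))
    (M : ℝ) (hM : 2 * (d : ℝ) ≤ M) :
    Continuous (fExt h M) ∧
    ∀ x x' : EuclideanSpace ℝ (Fin d), |fExt h M x - fExt h M x'| ≤ 2 * M * ‖x - x'‖ := by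
  have hM0 : 0 ≤ M := by linarith [(d.cast_nonneg : (0 : ℝ) ≤ d)]
  have hle := fExt_le_add (fun y hy => (hh y hy).1) hM0
  have hdist : ∀ x x', |fExt h M x - fExt h M x'| ≤ 2 * M * ‖x - x'‖ := fun x x' =>
    abs_sub_le_iff.2 ⟨by linarith [hle x x'], by linarith [norm_sub_rev x x' ▸ hle x' x]⟩
  refine ⟨(LipschitzWith.of_dist_le' (K := 2 * M) fun x x' => ?_).continuous, hdist⟩
  simpa [Real.dist_eq, dist_eq_norm] using hdist x x'

/-- If `0 ≤ h ≤ d` on the hypercube vertices and `M ≥ 2d`, then the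
extension `f(x) = min(M, h(round x) + 2M·g(x))` is continuous and `2M`-Lipschitz. -/
theorem extension_continuous_lipschitz (d : ℕ) (hd : 1 ≤ d)
    (h : EuclideanSpace ℝ (Fin d) → ℝ)
    (hh : ∀ y : EuclideanSpace ℝ (Fin d), (∀ i, y i = 1 ∨ y i = -1) →
      0 ≤ h y ∧ h y ≤ (d : ℝ))
    (M : ℝ) (hM : 2 * (d : ℝ) ≤ M) :
    Continuous (fExt h M) ∧
    ∀ x x' : EuclideanSpace ℝ (Fin d), |fExt h M x - fExt h M x'| ≤ 2 * M * ‖x - x'‖ :=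
  extension_continuous_lipschitz_general d h hh M hM
end

section
/- Let d ≥ 1 be an integer and β ≥ 16d a real number. Then in ℝ^d, ∫_{‖z‖ ≤ 1/2} exp(−β‖z‖) dz ≤ (1 + 2·exp(−d)) · ∫_{‖z‖ ≤ 1/4} exp(−β‖z‖) dz, where the integrals are with respect to Lebesgue measure and ‖·‖ is the Euclidean norm. -/
open Real MeasureTheory Pointwise

lemma rem_scale (d : ℕ) (β : ℝ) :
    (∫ z in Metric.closedBall (0 : EuclideanSpace ℝ (Fin d)) (1 / 2),
        Real.exp (-(β / 2 * ‖z‖)))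
      = (2 : ℝ) ^ d *
        ∫ z in Metric.closedBall (0 : EuclideanSpace ℝ (Fin d)) (1 / 4),
          Real.exp (-(β * ‖z‖)) := by
  have h := MeasureTheory.Measure.setIntegral_comp_smul_of_pos (μ := (volume : Measure (EuclideanSpace ℝ (Fin d))))
    (fun z => Real.exp (-(β * ‖z‖)))
    (Metric.closedBall (0 : EuclideanSpace ℝ (Fin d)) (1 / 2)) (R := (1/2 : ℝ)) (by norm_num)
  have hset : (1/2 : ℝ) • Metric.closedBall (0 : EuclideanSpace ℝ (Fin d)) (1 / 2)
      = Metric.closedBall (0 : EuclideanSpace ℝ (Fin d)) (1 / 4) := by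
    rw [smul_closedBall _ _ (by norm_num : (0:ℝ) ≤ 1/2)]
    norm_num
  rw [hset] at h
  have hfun : ∀ x : EuclideanSpace ℝ (Fin d),
      Real.exp (-(β * ‖(1/2 : ℝ) • x‖)) = Real.exp (-(β / 2 * ‖x‖)) := by
    intro x
    rw [norm_smul]
    norm_num
    ring_nf
  simp only [hfun] at h
  rw [h, finrank_euclideanSpace_fin, smul_eq_mul, one_div, inv_pow, inv_inv]

/-- For `β ≥ 16d`, the radial exponential density `exp(-β‖z‖)` on `ℝ^d`
has almost all of the mass of the ball of radius `1/2` already inside the ball of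
radius `1/4`. -/
theorem radial_exponential_mass_concentration (d : ℕ) (hd : 1 ≤ d)
    (β : ℝ) (hβ : 16 * (d : ℝ) ≤ β) :
    (∫ z in Metric.closedBall (0 : EuclideanSpace ℝ (Fin d)) (1 / 2),
        Real.exp (-(β * ‖z‖))) ≤
      (1 + 2 * Real.exp (-(d : ℝ))) *
        ∫ z in Metric.closedBall (0 : EuclideanSpace ℝ (Fin d)) (1 / 4),
          Real.exp (-(β * ‖z‖)) := by
  set E := EuclideanSpace ℝ (Fin d)
  have hβ0 : (0 : ℝ) ≤ β := le_trans (by positivity) hβ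
  have hcont : ∀ γ : ℝ, Continuous (fun z : E => Real.exp (-(γ * ‖z‖))) := by
    intro γ; continuity
  have hint : ∀ (γ : ℝ) (r : ℝ),
      IntegrableOn (fun z : E => Real.exp (-(γ * ‖z‖))) (Metric.closedBall 0 r) volume :=
    fun γ r => (hcont γ).continuousOn.integrableOn_compact (isCompact_closedBall _ _)
  -- split
  have hsub : Metric.closedBall (0 : E) (1/4) ⊆ Metric.closedBall (0 : E) (1/2) :=
    Metric.closedBall_subset_closedBall (by norm_num)
  have hsplit :
      (∫ z in Metric.closedBall (0 : E) (1/2), Real.exp (-(β * ‖z‖)))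
        = (∫ z in Metric.closedBall (0 : E) (1/4), Real.exp (-(β * ‖z‖)))
          + ∫ z in Metric.closedBall (0 : E) (1/2) \ Metric.closedBall (0 : E) (1/4),
              Real.exp (-(β * ‖z‖)) := by
    rw [integral_diff measurableSet_closedBall (hint β (1/2)) hsub]
    ring
  rw [hsplit]
  -- bound the annulus integral
  have hann :
      (∫ z in Metric.closedBall (0 : E) (1/2) \ Metric.closedBall (0 : E) (1/4),
          Real.exp (-(β * ‖z‖)))
        ≤ Real.exp (-(β/8)) * ∫ z in Metric.closedBall (0 : E) (1/2),
            Real.exp (-(β/2 * ‖z‖)) := by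
    calc (∫ z in Metric.closedBall (0 : E) (1/2) \ Metric.closedBall (0 : E) (1/4),
          Real.exp (-(β * ‖z‖)))
        ≤ ∫ z in Metric.closedBall (0 : E) (1/2) \ Metric.closedBall (0 : E) (1/4),
            Real.exp (-(β/8)) * Real.exp (-(β/2 * ‖z‖)) := by
          apply setIntegral_mono_on
          · exact (hint β (1/2)).mono_set Set.diff_subset
          · exact MeasureTheory.IntegrableOn.mono_set ((hint (β/2) (1/2)).const_mul _) Set.diff_subset
          · exact measurableSet_closedBall.diff measurableSet_closedBall
          · intro z hz
            rw [← Real.exp_add]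
            apply Real.exp_le_exp.2
            have h4 : (1/4 : ℝ) ≤ ‖z‖ := by
              by_contra h
              exact hz.2 (by simpa [Metric.mem_closedBall] using le_of_not_ge h)
            nlinarith [hβ0]
      _ = Real.exp (-(β/8)) * ∫ z in Metric.closedBall (0 : E) (1/2) \
            Metric.closedBall (0 : E) (1/4), Real.exp (-(β/2 * ‖z‖)) := by
          rw [integral_const_mul]
      _ ≤ Real.exp (-(β/8)) * ∫ z in Metric.closedBall (0 : E) (1/2),
            Real.exp (-(β/2 * ‖z‖)) := by
          apply mul_le_mul_of_nonneg_left _ (Real.exp_pos _).le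
          apply setIntegral_mono_set (hint (β/2) (1/2))
          · filter_upwards with z using (Real.exp_pos _).le
          · exact HasSubset.Subset.eventuallyLE Set.diff_subset
  -- scaling
  rw [rem_scale d β] at hann
  have hpos : (0 : ℝ) ≤ ∫ z in Metric.closedBall (0 : E) (1/4), Real.exp (-(β * ‖z‖)) :=
    setIntegral_nonneg measurableSet_closedBall (fun z _ => (Real.exp_pos _).le)
  -- numeric: exp(-β/8) * 2^d ≤ 2 * exp(-d)
  have hnum : Real.exp (-(β/8)) * 2 ^ d ≤ 2 * Real.exp (-(d : ℝ)) := by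
    have h1 : Real.exp (-(β/8)) ≤ Real.exp (-(2 * d)) := by
      apply Real.exp_le_exp.2; linarith
    have h2 : (2 : ℝ) ^ d ≤ Real.exp (d : ℝ) := by
      calc (2 : ℝ) ^ d ≤ (Real.exp 1) ^ d := by
            apply pow_le_pow_left₀ (by norm_num)
            have := Real.add_one_le_exp (1 : ℝ)
            linarith
        _ = Real.exp (d : ℝ) := by rw [← Real.exp_nat_mul]; ring_nf
    calc Real.exp (-(β/8)) * 2 ^ d ≤ Real.exp (-(2 * d)) * Real.exp (d : ℝ) := by
          apply mul_le_mul h1 h2 (by positivity) (Real.exp_pos _).le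
      _ = Real.exp (-(d : ℝ)) := by rw [← Real.exp_add]; ring_nf
      _ ≤ 2 * Real.exp (-(d : ℝ)) := by nlinarith [Real.exp_pos (-(d : ℝ))]
  nlinarith [mul_le_mul_of_nonneg_right hnum hpos]
end

section
/- Let d ≥ 1 be an integer and α ≥ 16d a real number. Then ∫_0^{1/2} exp(−α r) r^{d−1} dr ≤ (1 + 2·exp(−d)) · ∫_0^{1/4} exp(−α r) r^{d−1} dr. -/
/-!
Split `[0, 1/2]` at `1/4` and substitute `r = 2s` on `[1/4, 1/2]`. With `k = d - 1`, the integrand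
`f r = e^{-αr} r^k` satisfies `f (2s) = 2^k e^{-αs} f s ≤ e^{k - αs} f s`, and on `[1/8, 1/4]` we have
`αs ≥ 2d`, so `f (2s) ≤ e^{-d} f s`. Hence the integral over `[1/4, 1/2]` is at most
`2e^{-d}` times the integral over `[1/8, 1/4] ⊆ [0, 1/4]`.
-/

open Real MeasureTheory intervalIntegral Set

theorem integral_zero_two_mul_le_of_doubling {f : ℝ → ℝ} {c K : ℝ} (hc : 0 ≤ c) (hK : 0 ≤ K)
    (hf : IntervalIntegrable f volume 0 (2 * c)) (hf_nonneg : ∀ r ∈ Icc 0 c, 0 ≤ f r)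
    (hdouble : ∀ s ∈ Icc (c / 2) c, 2 * f (2 * s) ≤ K * f s) :
    ∫ r in 0..2 * c, f r ≤ (1 + K) * ∫ r in 0..c, f r := by
  have hf_lower : IntervalIntegrable f volume 0 c :=
    hf.mono_set (uIcc_subset_uIcc_left (by simp [uIcc_of_le, hc]; linarith))
  have hf_upper : IntervalIntegrable f volume c (2 * c) :=
    hf.mono_set (uIcc_subset_uIcc_right (by simp [uIcc_of_le, hc]; linarith))
  have hf_half : IntervalIntegrable f volume 0 (c / 2) :=
    hf_lower.mono_set (uIcc_subset_uIcc_left (by simp [uIcc_of_le, hc]; linarith))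
  have hf_top : IntervalIntegrable f volume (c / 2) c :=
    hf_lower.mono_set (uIcc_subset_uIcc_right (by simp [uIcc_of_le, hc]; linarith))
  have hsubst : ∫ r in c..2 * c, f r = ∫ s in c / 2..c, 2 * f (2 * s) := by
    rw [intervalIntegral.integral_const_mul, integral_comp_mul_left f two_ne_zero, smul_eq_mul]
    field_simp
  have hupper : ∫ s in c / 2..c, 2 * f (2 * s) ≤ K * ∫ r in c / 2..c, f r := by
    rw [← intervalIntegral.integral_const_mul]
    refine integral_mono_on (by linarith) ?_ (hf_top.const_mul K) hdouble
    simpa using (hf_upper.comp_mul_left (c := 2)).const_mul 2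
  have htail : ∫ r in c / 2..c, f r ≤ ∫ r in 0..c, f r := by
    rw [← integral_add_adjacent_intervals hf_half hf_top, le_add_iff_nonneg_left]
    exact integral_nonneg (by linarith) fun r hr => hf_nonneg r ⟨hr.1, by linarith [hr.2]⟩
  calc ∫ r in 0..2 * c, f r = (∫ r in 0..c, f r) + ∫ r in c..2 * c, f r :=
        (integral_add_adjacent_intervals hf_lower hf_upper).symm
    _ ≤ (∫ r in 0..c, f r) + K * ∫ r in 0..c, f r := by
        rw [hsubst]
        gcongr
        exact hupper.trans (mul_le_mul_of_nonneg_left htail hK)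
    _ = (1 + K) * ∫ r in 0..c, f r := by ring

theorem exp_neg_mul_mul_pow_two_mul_le (α : ℝ) (k : ℕ) {s : ℝ} (hs : 0 ≤ s) :
    exp (-(α * (2 * s))) * (2 * s) ^ k ≤ exp (k - α * s) * (exp (-(α * s)) * s ^ k) := by
  have htwo_pow : (2 : ℝ) ^ k ≤ exp k := by
    calc (2 : ℝ) ^ k ≤ exp 1 ^ k := by gcongr; linarith [add_one_le_exp (1 : ℝ)]
      _ = exp k := by rw [← exp_nat_mul, mul_one]
  calc exp (-(α * (2 * s))) * (2 * s) ^ k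
      = 2 ^ k * exp (-(α * s)) * (exp (-(α * s)) * s ^ k) := by
        rw [mul_pow, show -(α * (2 * s)) = -(α * s) + -(α * s) by ring, exp_add]
        ring
    _ ≤ exp k * exp (-(α * s)) * (exp (-(α * s)) * s ^ k) := by gcongr
    _ = exp (k - α * s) * (exp (-(α * s)) * s ^ k) := by rw [sub_eq_add_neg, exp_add]

theorem incomplete_gamma_comparison_general (d : ℕ)
    (α : ℝ) (hα : 16 * (d : ℝ) ≤ α) :
    (∫ r in (0 : ℝ)..(1 / 2), Real.exp (-(α * r)) * r ^ (d - 1)) ≤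
      (1 + 2 * Real.exp (-(d : ℝ))) *
        ∫ r in (0 : ℝ)..(1 / 4), Real.exp (-(α * r)) * r ^ (d - 1) := by
  have hdouble : ∀ s ∈ Icc ((1 / 4 : ℝ) / 2) (1 / 4),
      2 * (exp (-(α * (2 * s))) * (2 * s) ^ (d - 1)) ≤
        2 * exp (-(d : ℝ)) * (exp (-(α * s)) * s ^ (d - 1)) := by
    rintro s ⟨hs_lower, -⟩
    have hs : 0 ≤ s := by linarith
    have hexponent : ((d - 1 : ℕ) : ℝ) - α * s ≤ -d := by
      have : ((d - 1 : ℕ) : ℝ) ≤ d := Nat.cast_le.mpr (Nat.sub_le d 1)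
      nlinarith
    calc 2 * (exp (-(α * (2 * s))) * (2 * s) ^ (d - 1))
        ≤ 2 * (exp (((d - 1 : ℕ) : ℝ) - α * s) * (exp (-(α * s)) * s ^ (d - 1))) :=
          mul_le_mul_of_nonneg_left (exp_neg_mul_mul_pow_two_mul_le α (d - 1) hs) two_pos.le
      _ ≤ 2 * (exp (-(d : ℝ)) * (exp (-(α * s)) * s ^ (d - 1))) := by gcongr
      _ = 2 * exp (-(d : ℝ)) * (exp (-(α * s)) * s ^ (d - 1)) := by ring
  have hcomparison := integral_zero_two_mul_le_of_doubling (c := 1 / 4) (by norm_num)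
    (by positivity)
    ((by fun_prop : Continuous fun r : ℝ => exp (-(α * r)) * r ^ (d - 1)).intervalIntegrable _ _)
    (fun r hr => by have := hr.1; positivity) hdouble
  norm_num at hcomparison ⊢
  exact hcomparison

/-- Lemma on incomplete Gamma integrals: for an integer `d ≥ 1` and
`α ≥ 16d`, `∫_0^{1/2} e^{-αr} r^{d-1} dr ≤ (1 + 2e^{-d}) ∫_0^{1/4} e^{-αr} r^{d-1} dr`. -/
theorem incomplete_gamma_comparison (d : ℕ) (hd : 1 ≤ d)
    (α : ℝ) (hα : 16 * (d : ℝ) ≤ α) :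
    (∫ r in (0 : ℝ)..(1 / 2), Real.exp (-(α * r)) * r ^ (d - 1)) ≤
      (1 + 2 * Real.exp (-(d : ℝ))) *
        ∫ r in (0 : ℝ)..(1 / 4), Real.exp (-(α * r)) * r ^ (d - 1) :=
  incomplete_gamma_comparison_general d α hα
end

section
/- Let d ≥ 1, let h : {−1,1}^d → ℝ satisfy 0 ≤ h(y) ≤ d for all y, let M ≥ 2d, define f(x) = min(M, h(round(x)) + 2M·g(x)), let R ≥ 1, and let λ > 0 satisfy λM ≥ 4d·ln(24R). Then for every hypercube vertex y ∈ {−1,1}^d, ∫_{B_d(0,R)} exp(−λM) dx ≤ 3^{−d} · ∫_{B(y,1/8)} exp(−λ f(x)) dx; that is, the contribution of the constant level M over the entire ball of radius R is exponentially smaller than the Gibbs mass contributed by a single radius-1/8 ball around any hypercube vertex. -/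
/-! On `B(y, 1/8)` every point rounds to `y`, so there `f ≤ h(y) + M/4 ≤ 3M/4`. The two
integrals are then compared through the volumes `R^d` and `8^{-d}` of the balls, and the
claim reduces to `(24R)^d ≤ exp(λM/4)`, which is the hypothesis `λM ≥ 4d·ln(24R)`. -/

open Real MeasureTheory

/-- The hypercube vertex corresponding to a sign pattern `s : Fin d → Bool`. -/
noncomputable def vtx {d : ℕ} (s : Fin d → Bool) : EuclideanSpace ℝ (Fin d) :=
  WithLp.toLp 2 (fun i => if s i then (1 : ℝ) else -1)

open Metric

lemma vtx_apply_eq_one_or_neg_one {d : ℕ} (s : Fin d → Bool) (i : Fin d) :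
    vtx s i = 1 ∨ vtx s i = -1 := by
  by_cases hs : s i <;> simp [vtx, hs]

lemma rnd_eq_vtx_of_mem_closedBall {d : ℕ} {s : Fin d → Bool} {r : ℝ} (hr : r < 1)
    {x : EuclideanSpace ℝ (Fin d)} (hx : x ∈ closedBall (vtx s) r) : rnd x = vtx s := by
  ext i
  have hi : |x i - vtx s i| ≤ r := by
    simpa using (PiLp.norm_apply_le (x - vtx s) i).trans (mem_closedBall_iff_norm.mp hx)
  rw [abs_le] at hi
  by_cases hs : s i
  · simp only [vtx, hs, WithLp.ofLp_toLp, if_true] at hi ⊢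
    simp only [rnd, WithLp.ofLp_toLp, if_pos (by linarith : (0 : ℝ) ≤ x i)]
  · simp only [vtx, hs, WithLp.ofLp_toLp, Bool.false_eq_true, if_false] at hi ⊢
    simp only [rnd, WithLp.ofLp_toLp, if_neg (by linarith : ¬ (0 : ℝ) ≤ x i)]

lemma fExt_eq_of_mem_closedBall_vtx {d : ℕ} (h : EuclideanSpace ℝ (Fin d) → ℝ) (M : ℝ)
    {s : Fin d → Bool} {r : ℝ} (hr : r < 1) {x : EuclideanSpace ℝ (Fin d)}
    (hx : x ∈ closedBall (vtx s) r) :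
    fExt h M x = min M (h (vtx s) + 2 * M * ‖x - vtx s‖) := by
  rw [fExt, rnd_eq_vtx_of_mem_closedBall hr hx]

lemma integrableOn_closedBall_vtx_exp_neg_fExt {d : ℕ} (h : EuclideanSpace ℝ (Fin d) → ℝ)
    (M lam : ℝ) (s : Fin d → Bool) {r : ℝ} (hr : r < 1) :
    IntegrableOn (fun x => exp (-(lam * fExt h M x))) (closedBall (vtx s) r) := by
  have hcont : Continuous fun x : EuclideanSpace ℝ (Fin d) =>
      exp (-(lam * min M (h (vtx s) + 2 * M * ‖x - vtx s‖))) := by fun_prop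
  refine (hcont.continuousOn.integrableOn_compact (isCompact_closedBall _ _)).congr_fun
    (fun x hx => ?_) measurableSet_closedBall
  rw [fExt_eq_of_mem_closedBall_vtx h M hr hx]

lemma measureReal_closedBall_mul_exp_le_setIntegral_exp_neg_fExt {d : ℕ}
    (h : EuclideanSpace ℝ (Fin d) → ℝ) {M lam c r : ℝ} (hM : 0 ≤ M) (hlam : 0 ≤ lam)
    (s : Fin d → Bool) (hr₀ : 0 ≤ r) (hr : r < 1) (hc : h (vtx s) + 2 * M * r ≤ c) :
    r ^ d * volume.real (closedBall (0 : EuclideanSpace ℝ (Fin d)) 1) * exp (-(lam * c)) ≤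
      ∫ x in closedBall (vtx s) r, exp (-(lam * fExt h M x)) := by
  have hle : ∀ x ∈ closedBall (vtx s) r, exp (-(lam * c)) ≤ exp (-(lam * fExt h M x)) := by
    intro x hx
    have hx' : ‖x - vtx s‖ ≤ r := mem_closedBall_iff_norm.mp hx
    have hfExt_le : fExt h M x ≤ c := by
      rw [fExt_eq_of_mem_closedBall_vtx h M hr hx]
      exact (min_le_right _ _).trans (by nlinarith)
    gcongr
  calc r ^ d * volume.real (closedBall (0 : EuclideanSpace ℝ (Fin d)) 1) * exp (-(lam * c))
      = exp (-(lam * c)) * volume.real (closedBall (vtx s) r) := by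
        rw [Measure.addHaar_real_closedBall' _ _ hr₀, finrank_euclideanSpace_fin]
        ring
    _ ≤ _ := setIntegral_ge_of_const_le_real measurableSet_closedBall
        measure_closedBall_lt_top.ne hle (integrableOn_closedBall_vtx_exp_neg_fExt h M lam s hr)

lemma pow_mul_exp_neg_le_of_mul_log_le {d : ℕ} {R t : ℝ} (hR : 0 < R)
    (ht : 4 * d * log (24 * R) ≤ t) :
    R ^ d * exp (-t) ≤ (1 / 3) ^ d * (1 / 8) ^ d * exp (-(3 / 4 * t)) := by
  have h24 : (24 * R) ^ d * exp (-(t / 4)) ≤ 1 := by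
    rw [← le_div_iff₀ (exp_pos _), exp_neg, div_inv_eq_mul, one_mul,
      ← log_le_iff_le_exp (by positivity), log_pow]
    linarith
  have hR24 : (1 / 3 : ℝ) ^ d * (1 / 8) ^ d * (24 * R) ^ d = R ^ d := by
    rw [← mul_pow, ← mul_pow]; congr 1; ring
  have hsplit : exp (-t) = exp (-(3 / 4 * t)) * exp (-(t / 4)) := by
    rw [← exp_add]; ring_nf
  calc R ^ d * exp (-t)
      = (1 / 3) ^ d * (1 / 8) ^ d * exp (-(3 / 4 * t)) * ((24 * R) ^ d * exp (-(t / 4))) := by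
        rw [hsplit, ← hR24]; ring
    _ ≤ (1 / 3) ^ d * (1 / 8) ^ d * exp (-(3 / 4 * t)) :=
        mul_le_of_le_one_right (by positivity) h24

theorem constant_level_contribution_small_general (d : ℕ)
    (h : EuclideanSpace ℝ (Fin d) → ℝ)
    (hh : ∀ y : EuclideanSpace ℝ (Fin d), (∀ i, y i = 1 ∨ y i = -1) →
      0 ≤ h y ∧ h y ≤ (d : ℝ))
    (M : ℝ) (hM : 2 * (d : ℝ) ≤ M)
    (R : ℝ) (hR : 1 ≤ R)
    (lam : ℝ) (hlam : 0 < lam) (hlamM : 4 * (d : ℝ) * Real.log (24 * R) ≤ lam * M) :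
    ∀ s : Fin d → Bool,
      (∫ _x in Metric.closedBall (0 : EuclideanSpace ℝ (Fin d)) R,
          Real.exp (-(lam * M))) ≤
        (1 / 3 : ℝ) ^ d *
          ∫ x in Metric.closedBall (vtx s) (1 / 8), Real.exp (-(lam * fExt h M x)) := by
  intro s
  have hfExt : h (vtx s) + 2 * M * (1 / 8) ≤ 3 / 4 * M := by
    linarith [(hh (vtx s) (vtx_apply_eq_one_or_neg_one s)).2]
  have hlower := measureReal_closedBall_mul_exp_le_setIntegral_exp_neg_fExt h
    (by linarith : 0 ≤ M) hlam.le s (by norm_num) (by norm_num) hfExt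
  have hscalar := pow_mul_exp_neg_le_of_mul_log_le (d := d) (by linarith : 0 < R) hlamM
  set V := volume.real (closedBall (0 : EuclideanSpace ℝ (Fin d)) 1)
  calc (∫ _x in closedBall (0 : EuclideanSpace ℝ (Fin d)) R, exp (-(lam * M)))
      = R ^ d * exp (-(lam * M)) * V := by
        rw [setIntegral_const, Measure.addHaar_real_closedBall' _ _ (by linarith),
          finrank_euclideanSpace_fin, smul_eq_mul]
        ring
    _ ≤ (1 / 3) ^ d * (1 / 8) ^ d * exp (-(3 / 4 * (lam * M))) * V := by gcongr
    _ = (1 / 3) ^ d * ((1 / 8) ^ d * V * exp (-(lam * (3 / 4 * M)))) := by ring_nf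
    _ ≤ _ := by gcongr

/-- If `λM ≥ 4d·ln(24R)`, then the contribution of the constant level
`M` over the whole ball `B_d(0,R)` is at most `3^{-d}` times the Gibbs mass of any
single radius-`1/8` ball around a hypercube vertex. -/
theorem constant_level_contribution_small (d : ℕ) (hd : 1 ≤ d)
    (h : EuclideanSpace ℝ (Fin d) → ℝ)
    (hh : ∀ y : EuclideanSpace ℝ (Fin d), (∀ i, y i = 1 ∨ y i = -1) →
      0 ≤ h y ∧ h y ≤ (d : ℝ))
    (M : ℝ) (hM : 2 * (d : ℝ) ≤ M)
    (R : ℝ) (hR : 1 ≤ R)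
    (lam : ℝ) (hlam : 0 < lam) (hlamM : 4 * (d : ℝ) * Real.log (24 * R) ≤ lam * M) :
    ∀ s : Fin d → Bool,
      (∫ _x in Metric.closedBall (0 : EuclideanSpace ℝ (Fin d)) R,
          Real.exp (-(lam * M))) ≤
        (1 / 3 : ℝ) ^ d *
          ∫ x in Metric.closedBall (vtx s) (1 / 8), Real.exp (-(lam * fExt h M x)) :=
  constant_level_contribution_small_general d h hh M hM R hR lam hlam hlamM
end

section
/- Let d ≥ 1, let h : {−1,1}^d → ℝ satisfy 0 ≤ h(y) ≤ d for all y, let M ≥ 2d, let R ≥ 2√d, define f(x) = min(M, h(round(x)) + 2M·g(x)), and let λ ≥ 4d·ln(24R)/M. Then the Gibbs distribution D_f^{λ} on B_d(0,R) (with density proportional to exp(−λ f)) assigns to the union of the closed balls of radius 1/4 around the 2^d hypercube vertices mass at least 1 − 3·exp(−d). -/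
open Real MeasureTheory

lemma rnd_apply {d : ℕ} (x : EuclideanSpace ℝ (Fin d)) (i : Fin d) :
    rnd x i = if 0 ≤ x i then 1 else -1 := rfl

lemma vtx_apply {d : ℕ} (s : Fin d → Bool) (i : Fin d) :
    vtx s i = if s i then 1 else -1 := rfl

lemma vtx_pm {d : ℕ} (s : Fin d → Bool) : ∀ i, vtx s i = 1 ∨ vtx s i = -1 := by
  intro i; rw [vtx_apply]; split <;> simp

lemma rnd_eq_vtx {d : ℕ} (x : EuclideanSpace ℝ (Fin d)) :
    rnd x = vtx (fun i => decide (0 ≤ x i)) := by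
  ext i
  rw [rnd_apply, vtx_apply]
  by_cases hx : 0 ≤ x i <;> simp [hx]

lemma coord_abs_le_norm {d : ℕ} (z : EuclideanSpace ℝ (Fin d)) (i : Fin d) :
    |z i| ≤ ‖z‖ := by
  rw [EuclideanSpace.norm_eq]
  rw [← Real.sqrt_sq_eq_abs]
  apply Real.sqrt_le_sqrt
  have : |z i| ^ 2 ≤ ∑ j, ‖z j‖ ^ 2 := by
    have := Finset.single_le_sum (f := fun j => ‖z j‖ ^ 2)
      (fun j _ => by positivity) (Finset.mem_univ i)
    simpa [sq_abs] using this
  simpa [sq_abs] using this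

lemma norm_vtx {d : ℕ} (s : Fin d → Bool) : ‖vtx s‖ = Real.sqrt d := by
  rw [EuclideanSpace.norm_eq]
  congr 1
  have : ∀ i, ‖vtx s i‖ ^ 2 = 1 := by
    intro i; rcases vtx_pm s i with h | h <;> simp [h]
  rw [Finset.sum_congr rfl (fun i _ => this i)]
  simp

lemma norm_sub_rnd {d : ℕ} (x : EuclideanSpace ℝ (Fin d)) :
    ‖x - rnd x‖ = Real.sqrt (∑ i, (|x i| - 1) ^ 2) := by
  rw [EuclideanSpace.norm_eq]
  congr 1
  apply Finset.sum_congr rfl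
  intro i _
  have hsub : (x - rnd x) i = x i - rnd x i := rfl
  rw [Real.norm_eq_abs, sq_abs, hsub, rnd_apply]
  by_cases hx : 0 ≤ x i
  · rw [if_pos hx, abs_of_nonneg hx]
  · rw [if_neg hx, abs_of_neg (lt_of_not_ge hx)]; ring

lemma measurable_coord {d : ℕ} (i : Fin d) :
    Measurable fun x : EuclideanSpace ℝ (Fin d) => x i :=
  (EuclideanSpace.proj (𝕜 := ℝ) i).continuous.measurable

lemma measurable_sgn {d : ℕ} :
    Measurable fun x : EuclideanSpace ℝ (Fin d) => fun i => decide (0 ≤ x i) := by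
  apply measurable_pi_lambda
  intro i
  apply measurable_to_countable'
  intro b
  cases b
  · have : (fun x : EuclideanSpace ℝ (Fin d) => decide (0 ≤ x i)) ⁻¹' {false}
        = {x | 0 ≤ x i}ᶜ := by ext x; simp
    rw [this]
    exact (measurableSet_le measurable_const (measurable_coord i)).compl
  · have : (fun x : EuclideanSpace ℝ (Fin d) => decide (0 ≤ x i)) ⁻¹' {true}
        = {x | 0 ≤ x i} := by ext x; simp
    rw [this]
    exact measurableSet_le measurable_const (measurable_coord i)

lemma measurable_fExt {d : ℕ} (h : EuclideanSpace ℝ (Fin d) → ℝ) (M : ℝ) :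
    Measurable (fExt h M) := by
  have h1 : Measurable fun x : EuclideanSpace ℝ (Fin d) => h (rnd x) := by
    have heq : (fun x : EuclideanSpace ℝ (Fin d) => h (rnd x))
        = (h ∘ vtx) ∘ (fun x i => decide (0 ≤ x i)) := by
      funext x; simp only [Function.comp_apply, rnd_eq_vtx x]
    rw [heq]
    exact (measurable_of_countable _).comp measurable_sgn
  have h2 : Measurable fun x : EuclideanSpace ℝ (Fin d) => ‖x - rnd x‖ := by
    have heq : (fun x : EuclideanSpace ℝ (Fin d) => ‖x - rnd x‖)
        = fun x => Real.sqrt (∑ i, (|x i| - 1) ^ 2) := funext norm_sub_rnd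
    rw [heq]
    apply Measurable.sqrt
    apply Finset.measurable_sum
    intro i _
    exact (((measurable_coord i).abs.sub measurable_const).pow measurable_const)
  exact measurable_const.min (h1.add (h2.const_mul (2 * M)))


set_option maxHeartbeats 1000000 in
/-- For `M ≥ 2d`, `R ≥ 2√d` and `λ ≥ 4d·ln(24R)/M`, the Gibbs
distribution of `f` on `B_d(0,R)` puts mass at least `1 - 3e^{-d}` on the union of
the radius-`1/4` balls around the `2^d` hypercube vertices. -/
theorem gibbs_mass_concentrates_on_vertex_balls (d : ℕ) (hd : 1 ≤ d)
    (h : EuclideanSpace ℝ (Fin d) → ℝ)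
    (hh : ∀ y : EuclideanSpace ℝ (Fin d), (∀ i, y i = 1 ∨ y i = -1) →
      0 ≤ h y ∧ h y ≤ (d : ℝ))
    (M : ℝ) (hM : 2 * (d : ℝ) ≤ M)
    (R : ℝ) (hR : 2 * Real.sqrt d ≤ R)
    (lam : ℝ) (hlam : 4 * (d : ℝ) * Real.log (24 * R) / M ≤ lam) :
    1 - 3 * Real.exp (-(d : ℝ)) ≤
      (∫ x in Metric.closedBall (0 : EuclideanSpace ℝ (Fin d)) R ∩
          (⋃ s : Fin d → Bool, Metric.closedBall (vtx s) (1 / 4)),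
          Real.exp (-(lam * fExt h M x))) /
        (∫ x in Metric.closedBall (0 : EuclideanSpace ℝ (Fin d)) R,
          Real.exp (-(lam * fExt h M x))) := by
  classical
  -- basic numeric facts
  have hd1 : (1 : ℝ) ≤ (d : ℝ) := by exact_mod_cast hd
  have hM0 : (0 : ℝ) < M := lt_of_lt_of_le (by linarith) hM
  have hsqrt1 : (1 : ℝ) ≤ Real.sqrt d := by
    have := Real.sqrt_le_sqrt hd1
    simpa using this
  have hR2 : (2 : ℝ) ≤ R := le_trans (by linarith) hR
  have hR0 : (0 : ℝ) < R := by linarith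
  have hlog0 : (0 : ℝ) ≤ Real.log (24 * R) := Real.log_nonneg (by linarith)
  have hlam0 : (0 : ℝ) ≤ lam :=
    le_trans (by positivity) hlam
  -- minimizing vertex
  obtain ⟨s₀, hs₀⟩ := Finite.exists_min (fun s : Fin d → Bool => h (vtx s))
  set m := h (vtx s₀) with hm_def
  have hm0 : 0 ≤ m := (hh (vtx s₀) (vtx_pm s₀)).1
  have hmd : m ≤ (d : ℝ) := (hh (vtx s₀) (vtx_pm s₀)).2
  -- sets
  set B : Set (EuclideanSpace ℝ (Fin d)) := Metric.closedBall (0 : EuclideanSpace ℝ (Fin d)) R with hB_def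
  set U : Set (EuclideanSpace ℝ (Fin d)) := ⋃ s : Fin d → Bool, Metric.closedBall (vtx s) (1 / 4) with hU_def
  set G : Set (EuclideanSpace ℝ (Fin d)) := Metric.closedBall (vtx s₀) (1 / 8) with hG_def
  -- pointwise bounds on fExt
  have L1 : ∀ x ∈ G, fExt h M x ≤ m + M / 4 := by
    intro x hx
    have hdist : ‖x - vtx s₀‖ ≤ 1 / 8 := by
      rw [← dist_eq_norm]; exact Metric.mem_closedBall.1 hx
    have hcoord : ∀ i, |x i - vtx s₀ i| ≤ 1 / 8 := by
      intro i
      have h1 := coord_abs_le_norm (x - vtx s₀) i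
      have h2 : (x - vtx s₀) i = x i - vtx s₀ i := rfl
      rw [h2] at h1
      exact h1.trans hdist
    have hrnd : rnd x = vtx s₀ := by
      ext i
      have hci := hcoord i
      rw [rnd_apply, vtx_apply]
      cases hsi : s₀ i
      · rw [vtx_apply, hsi, if_neg Bool.false_ne_true] at hci
        have : ¬ (0 ≤ x i) := by
          intro h0
          have := abs_le.1 hci
          linarith [this.2]
        rw [if_neg this, if_neg Bool.false_ne_true]
      · rw [vtx_apply, hsi, if_pos rfl] at hci
        have : 0 ≤ x i := by
          have := abs_le.1 hci
          linarith [this.1]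
        rw [if_pos this, if_pos rfl]
    have : fExt h M x ≤ h (vtx s₀) + 2 * M * ‖x - vtx s₀‖ := by
      rw [fExt, hrnd]; exact min_le_right _ _
    nlinarith [hdist, hM0.le]
  have L2 : ∀ x ∉ U, m + M / 2 ≤ fExt h M x := by
    intro x hxU
    have hnot : x ∉ Metric.closedBall (vtx (fun i => decide (0 ≤ x i))) (1 / 4) := by
      intro hmem
      exact hxU (Set.mem_iUnion.2 ⟨_, hmem⟩)
    have hdist : 1 / 4 < ‖x - rnd x‖ := by
      rw [rnd_eq_vtx, ← dist_eq_norm]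
      exact lt_of_not_ge (fun hc => hnot (Metric.mem_closedBall.2 hc))
    have hhm : m ≤ h (rnd x) := by rw [rnd_eq_vtx]; exact hs₀ _
    rw [fExt]
    apply le_min (by linarith)
    nlinarith [hM0]
  have L3 : ∀ x : EuclideanSpace ℝ (Fin d), 0 ≤ fExt h M x ∧ fExt h M x ≤ M := by
    intro x
    have hpm : ∀ i, rnd x i = 1 ∨ rnd x i = -1 := by
      rw [rnd_eq_vtx]; exact vtx_pm _
    have h0 : 0 ≤ h (rnd x) := (hh (rnd x) hpm).1
    constructor
    · exact le_min hM0.le (by positivity)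
    · exact min_le_left _ _
  -- the integrand
  set φ : EuclideanSpace ℝ (Fin d) → ℝ := fun x => Real.exp (-(lam * fExt h M x)) with hφ_def
  have hφpos : ∀ x, 0 < φ x := fun x => Real.exp_pos _
  have hφ1 : ∀ x, φ x ≤ 1 := by
    intro x
    rw [hφ_def]
    calc Real.exp (-(lam * fExt h M x)) ≤ Real.exp 0 := by
          apply Real.exp_le_exp.2
          simpa using mul_nonneg hlam0 (L3 x).1
      _ = 1 := Real.exp_zero
  have hφm : Measurable φ :=
    Real.measurable_exp.comp ((measurable_fExt h M).const_mul lam).neg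
  have hint : ∀ s : Set (EuclideanSpace ℝ (Fin d)), volume s ≠ ⊤ → IntegrableOn φ s volume := by
    intro s hs
    apply Integrable.mono' (g := fun _ => (1 : ℝ))
      (integrableOn_const hs)
      hφm.aestronglyMeasurable
    exact Filter.Eventually.of_forall fun x => by
      rw [Real.norm_eq_abs, abs_of_pos (hφpos x)]; exact hφ1 x
  -- measurability and finiteness of sets
  have hBmeas : MeasurableSet B := measurableSet_closedBall
  have hUmeas : MeasurableSet U := MeasurableSet.iUnion fun s => measurableSet_closedBall
  have hBfin : volume B ≠ ⊤ := measure_closedBall_lt_top.ne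
  have hGfin : volume G ≠ ⊤ := measure_closedBall_lt_top.ne
  have hBdUfin : volume (B \ U) ≠ ⊤ :=
    ((measure_mono Set.diff_subset).trans_lt measure_closedBall_lt_top).ne
  have hBUfin : volume (B ∩ U) ≠ ⊤ :=
    ((measure_mono Set.inter_subset_left).trans_lt measure_closedBall_lt_top).ne
  -- G ⊆ B ∩ U
  have hGB : G ⊆ B := by
    intro x hx
    have h1 : dist x (vtx s₀) ≤ 1 / 8 := Metric.mem_closedBall.1 hx
    have h2 : dist (vtx s₀) (0 : EuclideanSpace ℝ (Fin d)) = Real.sqrt d := by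
      rw [dist_zero_right, norm_vtx]
    have := dist_triangle x (vtx s₀) (0 : EuclideanSpace ℝ (Fin d))
    apply Metric.mem_closedBall.2
    have hsd : Real.sqrt d + 1 / 8 ≤ R := by linarith
    calc dist x 0 ≤ dist x (vtx s₀) + dist (vtx s₀) 0 := dist_triangle _ _ _
      _ ≤ 1 / 8 + Real.sqrt d := by rw [h2]; linarith
      _ ≤ R := by linarith
  have hGU : G ⊆ U := by
    intro x hx
    exact Set.mem_iUnion.2 ⟨s₀, Metric.closedBall_subset_closedBall (by norm_num) hx⟩
  have hGBU : G ⊆ B ∩ U := Set.subset_inter hGB hGU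
  -- volumes
  set c : ℝ := (volume (Metric.ball (0 : EuclideanSpace ℝ (Fin d)) 1)).toReal with hc_def
  have hfr : Module.finrank ℝ (EuclideanSpace ℝ (Fin d)) = d := finrank_euclideanSpace_fin
  have hc0 : 0 < c := by
    rw [hc_def]
    apply ENNReal.toReal_pos
    · exact (Metric.measure_ball_pos volume (0 : EuclideanSpace ℝ (Fin d)) one_pos).ne'
    · exact measure_ball_lt_top.ne
  have hvB : (volume B).toReal = R ^ d * c := by
    rw [hB_def, Measure.addHaar_closedBall volume (0 : EuclideanSpace ℝ (Fin d)) hR0.le, hfr,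
      ENNReal.toReal_mul, ENNReal.toReal_ofReal (by positivity)]
  have hvG : (volume G).toReal = (1 / 8 : ℝ) ^ d * c := by
    rw [hG_def, Measure.addHaar_closedBall volume (vtx s₀) (by norm_num : (0:ℝ) ≤ 1/8), hfr,
      ENNReal.toReal_mul, ENNReal.toReal_ofReal (by positivity)]
  -- named integrals
  set Z : ℝ := ∫ x in B, φ x with hZ_def
  set N : ℝ := ∫ x in B ∩ U, φ x with hN_def
  set Bad : ℝ := ∫ x in B \ U, φ x with hBad_def
  have hsplit : N + Bad = Z := integral_inter_add_diff hUmeas (hint B hBfin)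
  -- exponential constants
  set ea : ℝ := Real.exp (-(lam * (m + M / 4))) with hea_def
  set eb : ℝ := Real.exp (-(lam * (m + M / 2))) with heb_def
  have hea0 : 0 < ea := Real.exp_pos _
  have heb0 : 0 < eb := Real.exp_pos _
  -- Good lower bound
  have hGood : ea * ((1 / 8 : ℝ) ^ d * c) ≤ ∫ x in G, φ x := by
    rw [← hvG]
    apply setIntegral_ge_of_const_le_real measurableSet_closedBall hGfin
    · intro x hx
      rw [hφ_def, hea_def]
      apply Real.exp_le_exp.2
      exact neg_le_neg (mul_le_mul_of_nonneg_left (L1 x hx) hlam0)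
    · exact hint G hGfin
  have hGoodN : (∫ x in G, φ x) ≤ N := by
    apply setIntegral_mono_set (hint _ hBUfin)
      (Filter.Eventually.of_forall fun x => (hφpos x).le)
      (HasSubset.Subset.eventuallyLE hGBU)
  have hGoodZ : (∫ x in G, φ x) ≤ Z := by
    apply setIntegral_mono_set (hint _ hBfin)
      (Filter.Eventually.of_forall fun x => (hφpos x).le)
      (HasSubset.Subset.eventuallyLE hGB)
  have hZpos : 0 < Z := by
    have : 0 < ea * ((1 / 8 : ℝ) ^ d * c) := by positivity
    linarith
  -- Bad upper bound
  have hBadUB : Bad ≤ eb * (R ^ d * c) := by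
    have h1 : Bad ≤ ∫ _x in B \ U, eb := by
      apply setIntegral_mono_on (hint _ hBdUfin)
        (integrableOn_const hBdUfin)
        (hBmeas.diff hUmeas)
      intro x hx
      rw [hφ_def, heb_def]
      apply Real.exp_le_exp.2
      exact neg_le_neg (mul_le_mul_of_nonneg_left (L2 x hx.2) hlam0)
    rw [setIntegral_const, smul_eq_mul] at h1
    have h2 : (volume (B \ U)).toReal ≤ R ^ d * c := by
      rw [← hvB]
      exact ENNReal.toReal_mono hBfin (measure_mono Set.diff_subset)
    calc Bad ≤ (volume (B \ U)).toReal * eb := h1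
      _ ≤ (R ^ d * c) * eb := mul_le_mul_of_nonneg_right h2 heb0.le
      _ = eb * (R ^ d * c) := by ring
  -- key numeric inequality
  have hq_def : eb = ea * Real.exp (-(lam * M / 4)) := by
    rw [hea_def, heb_def, ← Real.exp_add]
    ring_nf
  set q : ℝ := Real.exp (-(lam * M / 4)) with hqq
  have hq0 : 0 < q := Real.exp_pos _
  have hlamM : (d : ℝ) * Real.log (24 * R) ≤ lam * M / 4 := by
    rw [div_le_iff₀ hM0] at hlam
    nlinarith
  have h24pow : ((24 * R : ℝ)) ^ d ≤ Real.exp (lam * M / 4) := by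
    calc ((24 * R : ℝ)) ^ d = Real.exp (Real.log (24 * R)) ^ d := by
          rw [Real.exp_log (by linarith)]
      _ = Real.exp ((d : ℝ) * Real.log (24 * R)) := by
          rw [← Real.exp_nat_mul]
      _ ≤ Real.exp (lam * M / 4) := Real.exp_le_exp.2 hlamM
  have hq24 : q * (24 * R) ^ d ≤ 1 := by
    calc q * (24 * R) ^ d ≤ q * Real.exp (lam * M / 4) :=
          mul_le_mul_of_nonneg_left h24pow hq0.le
      _ = 1 := by rw [hqq, ← Real.exp_add]; ring_nf; exact Real.exp_zero
  have hexp3 : Real.exp ((d : ℝ)) ≤ (3 : ℝ) ^ d := by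
    calc Real.exp ((d : ℝ)) = Real.exp 1 ^ d := by
          rw [← Real.exp_nat_mul, mul_one]
      _ ≤ (3 : ℝ) ^ d := pow_le_pow_left₀ (Real.exp_pos 1).le
          (le_of_lt (lt_trans Real.exp_one_lt_d9 (by norm_num))) d
  have h3ed : (1 : ℝ) ≤ (3 : ℝ) ^ d * Real.exp (-(d : ℝ)) := by
    rw [Real.exp_neg, le_mul_inv_iff₀ (Real.exp_pos _), one_mul]
    exact hexp3
  have hQ8Q24 : ((1 / 8 : ℝ)) ^ d * (24 : ℝ) ^ d = (3 : ℝ) ^ d := by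
    rw [← mul_pow]; norm_num
  have h24R : ((24 * R : ℝ)) ^ d = (24 : ℝ) ^ d * R ^ d := mul_pow 24 R d
  have hstep : q * R ^ d ≤ 3 * Real.exp (-(d : ℝ)) * (1 / 8 : ℝ) ^ d := by
    have h24pos : (0 : ℝ) < (24 : ℝ) ^ d := by positivity
    rw [← mul_le_mul_iff_of_pos_right h24pos]
    have lhs_eq : q * R ^ d * (24 : ℝ) ^ d = q * (24 * R) ^ d := by
      rw [h24R]; ring
    have rhs_eq : 3 * Real.exp (-(d : ℝ)) * (1 / 8 : ℝ) ^ d * (24 : ℝ) ^ d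
        = 3 * ((3 : ℝ) ^ d * Real.exp (-(d : ℝ))) := by
      rw [mul_assoc, hQ8Q24]; ring
    rw [lhs_eq, rhs_eq]
    linarith
  have hKEY : eb * (R ^ d * c) ≤ 3 * Real.exp (-(d : ℝ)) * (ea * ((1 / 8 : ℝ) ^ d * c)) := by
    calc eb * (R ^ d * c) = (q * R ^ d) * (ea * c) := by rw [hq_def]; ring
      _ ≤ (3 * Real.exp (-(d : ℝ)) * (1 / 8 : ℝ) ^ d) * (ea * c) :=
          mul_le_mul_of_nonneg_right hstep (by positivity)
      _ = 3 * Real.exp (-(d : ℝ)) * (ea * ((1 / 8 : ℝ) ^ d * c)) := by ring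
  -- conclude
  have hBad3 : Bad ≤ 3 * Real.exp (-(d : ℝ)) * Z := by
    have h1 : 3 * Real.exp (-(d : ℝ)) * (ea * ((1 / 8 : ℝ) ^ d * c))
        ≤ 3 * Real.exp (-(d : ℝ)) * Z := by
      apply mul_le_mul_of_nonneg_left _ (by positivity)
      linarith
    linarith
  rw [le_div_iff₀ hZpos]
  have hring : (1 - 3 * Real.exp (-(d : ℝ))) * Z = Z - 3 * Real.exp (-(d : ℝ)) * Z := by
    ring
  rw [hring]
  linarith
end

section
/- Let d ≥ 1, R > 0, let f : B_d(0,R) → ℝ be measurable and bounded, let a ∈ ℝ, and suppose the level set L_a = {x ∈ B_d(0,R) : f(x) ≤ a} is measurable with positive Lebesgue volume. Let ε > 0, δ ∈ (0,1), and λ ≥ (ln(1/δ) + ln(vol(B_d(0,R))/vol(L_a)))/ε. Then the Gibbs distribution D_f^λ on B_d(0,R) satisfies D_f^λ({x ∈ B_d(0,R) : f(x) ≥ a + ε}) ≤ δ. -/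
open Real MeasureTheory

/-- Sampling implies optimization, generic: if the level set
`L_a = {x ∈ B(0,R) : f x ≤ a}` has positive volume and
`λ ≥ (ln(1/δ) + ln(vol B / vol L_a)) / ε`, then the Gibbs distribution of `f` on
`B(0,R)` puts mass at most `δ` on `{f ≥ a + ε}`. -/
theorem sampling_implies_optimization_generic (d : ℕ) (hd : 1 ≤ d)
    (R : ℝ) (hR : 0 < R)
    (f : EuclideanSpace ℝ (Fin d) → ℝ) (hfm : Measurable f)
    (C : ℝ) (hfb : ∀ x ∈ Metric.closedBall (0 : EuclideanSpace ℝ (Fin d)) R, |f x| ≤ C)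
    (a : ℝ)
    (hLvol : 0 <
      (volume {x ∈ Metric.closedBall (0 : EuclideanSpace ℝ (Fin d)) R | f x ≤ a}).toReal)
    (ε : ℝ) (hε : 0 < ε) (δ : ℝ) (hδ : 0 < δ) (hδ' : δ < 1)
    (lam : ℝ)
    (hlam : (Real.log (1 / δ) +
        Real.log ((volume (Metric.closedBall (0 : EuclideanSpace ℝ (Fin d)) R)).toReal /
          (volume {x ∈ Metric.closedBall (0 : EuclideanSpace ℝ (Fin d)) R |
            f x ≤ a}).toReal)) / ε ≤ lam) :
    (∫ x in {x ∈ Metric.closedBall (0 : EuclideanSpace ℝ (Fin d)) R | a + ε ≤ f x},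
        Real.exp (-(lam * f x))) /
      (∫ x in Metric.closedBall (0 : EuclideanSpace ℝ (Fin d)) R,
        Real.exp (-(lam * f x))) ≤ δ := by
  set B := Metric.closedBall (0 : EuclideanSpace ℝ (Fin d)) R with hBdef
  set L := {x ∈ B | f x ≤ a} with hLdef
  set U := {x ∈ B | a + ε ≤ f x} with hUdef
  have mB : MeasurableSet B := measurableSet_closedBall
  have mL : MeasurableSet L := mB.inter (hfm measurableSet_Iic)
  have mU : MeasurableSet U := mB.inter (hfm measurableSet_Ici)
  have hLB : L ⊆ B := fun x hx => hx.1
  have hUB : U ⊆ B := fun x hx => hx.1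
  have hBfin : volume B ≠ ⊤ := (MeasureTheory.measure_closedBall_lt_top).ne
  have hLfin : volume L ≠ ⊤ := (lt_of_le_of_lt (measure_mono hLB) hBfin.lt_top).ne
  have hUfin : volume U ≠ ⊤ := (lt_of_le_of_lt (measure_mono hUB) hBfin.lt_top).ne
  set vB := (volume B).toReal with hvB
  set vL := (volume L).toReal with hvL
  set vU := (volume U).toReal with hvU
  have hvLB : vL ≤ vB := ENNReal.toReal_mono hBfin (measure_mono hLB)
  have hvUB : vU ≤ vB := ENNReal.toReal_mono hBfin (measure_mono hUB)
  have hvBpos : 0 < vB := lt_of_lt_of_le hLvol hvLB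
  -- lam ≥ 0
  have hr1 : (1:ℝ) ≤ vB / vL := (one_le_div hLvol).2 hvLB
  have hlampos : 0 < lam := by
    refine lt_of_lt_of_le ?_ hlam
    apply div_pos _ hε
    have h1 : 0 < Real.log (1/δ) := Real.log_pos (by rw [one_div]; exact (one_lt_inv₀ hδ).2 hδ')
    have h2 : 0 ≤ Real.log (vB / vL) := Real.log_nonneg hr1
    linarith
  -- integrability
  have hC : 0 ≤ C := by
    have : (0:EuclideanSpace ℝ (Fin d)) ∈ B := Metric.mem_closedBall_self hR.le
    exact le_trans (abs_nonneg _) (hfb _ this)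
  have hgm : Measurable fun x => Real.exp (-(lam * f x)) :=
    Real.measurable_exp.comp ((measurable_const.mul hfm).neg)
  have hgB : IntegrableOn (fun x => Real.exp (-(lam * f x))) B volume := by
    apply Measure.integrableOn_of_bounded hBfin hgm.aestronglyMeasurable
      (M := Real.exp (|lam| * C))
    filter_upwards [ae_restrict_mem mB] with x hx
    rw [Real.norm_eq_abs, abs_of_pos (Real.exp_pos _)]
    apply Real.exp_le_exp.2
    calc -(lam * f x) ≤ |lam * f x| := neg_le_abs _
      _ = |lam| * |f x| := abs_mul _ _
      _ ≤ |lam| * C := by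
          exact mul_le_mul_of_nonneg_left (hfb x hx) (abs_nonneg _)
  have hgL : IntegrableOn (fun x => Real.exp (-(lam * f x))) L volume := hgB.mono_set hLB
  have hgU : IntegrableOn (fun x => Real.exp (-(lam * f x))) U volume := hgB.mono_set hUB
  -- numerator bound
  have hnum : (∫ x in U, Real.exp (-(lam * f x))) ≤ Real.exp (-(lam * (a + ε))) * vU := by
    have h : (∫ x in U, Real.exp (-(lam * f x))) ≤
        ∫ _x in U, Real.exp (-(lam * (a + ε))) := by
      refine setIntegral_mono_on hgU (integrableOn_const hUfin) mU ?_
      intro x hx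
      apply Real.exp_le_exp.2
      have h2 : a + ε ≤ f x := hx.2
      nlinarith [hlampos.le]
    simpa [setIntegral_const, mul_comm, measureReal_def] using h
  -- denominator bound
  have hden1 : Real.exp (-(lam * a)) * vL ≤ ∫ x in L, Real.exp (-(lam * f x)) := by
    have h : (∫ _x in L, Real.exp (-(lam * a))) ≤
        ∫ x in L, Real.exp (-(lam * f x)) := by
      refine setIntegral_mono_on (integrableOn_const hLfin) hgL mL ?_
      intro x hx
      apply Real.exp_le_exp.2
      have h2 : f x ≤ a := hx.2
      nlinarith [hlampos.le]
    simpa [setIntegral_const, mul_comm, measureReal_def] using h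
  have hden2 : (∫ x in L, Real.exp (-(lam * f x))) ≤ ∫ x in B, Real.exp (-(lam * f x)) := by
    apply setIntegral_mono_set hgB
    · filter_upwards with x using (Real.exp_pos _).le
    · exact HasSubset.Subset.eventuallyLE hLB
  have hdenpos : 0 < ∫ x in B, Real.exp (-(lam * f x)) :=
    lt_of_lt_of_le (by positivity) (hden1.trans hden2)
  -- key exponential inequality
  have hkey : Real.exp (-(lam * ε)) * (vB / vL) ≤ δ := by
    have hle : Real.log (1/δ) + Real.log (vB / vL) ≤ lam * ε := by
      have := (div_le_iff₀ hε).1 hlam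
      linarith
    have hrpos : 0 < vB / vL := div_pos hvBpos hLvol
    have : Real.exp (-(lam * ε)) ≤ Real.exp (-(Real.log (1/δ) + Real.log (vB/vL))) :=
      Real.exp_le_exp.2 (by linarith)
    have heq : Real.exp (-(Real.log (1/δ) + Real.log (vB/vL))) = δ * (vL / vB) := by
      rw [neg_add, Real.exp_add, Real.exp_neg, Real.exp_neg, Real.exp_log (by positivity),
        Real.exp_log hrpos]
      field_simp
    calc Real.exp (-(lam * ε)) * (vB / vL) ≤ δ * (vL / vB) * (vB / vL) := by
          apply mul_le_mul_of_nonneg_right _ hrpos.le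
          rw [← heq]; exact this
      _ = δ := by field_simp
  -- conclude
  rw [div_le_iff₀ hdenpos]
  calc (∫ x in U, Real.exp (-(lam * f x))) ≤ Real.exp (-(lam * (a + ε))) * vU := hnum
    _ ≤ Real.exp (-(lam * (a + ε))) * vB :=
        mul_le_mul_of_nonneg_left hvUB (Real.exp_pos _).le
    _ ≤ δ * (Real.exp (-(lam * a)) * vL) := by
        have : Real.exp (-(lam * (a + ε))) = Real.exp (-(lam*a)) * Real.exp (-(lam*ε)) := by
          rw [← Real.exp_add]; ring_nf
        rw [this]
        have h2 : Real.exp (-(lam*ε)) * vB ≤ δ * vL := by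
          have := mul_le_mul_of_nonneg_right hkey hLvol.le
          rwa [mul_assoc, div_mul_cancel₀ _ hLvol.ne'] at this
        nlinarith [Real.exp_pos (-(lam*a))]
    _ ≤ δ * ∫ x in B, Real.exp (-(lam * f x)) := by
        apply mul_le_mul_of_nonneg_left (hden1.trans hden2) hδ.le
end

section
/- Let d ≥ 1, R > 0, L > 0, let f : B_d(0,R) → ℝ be L-Lipschitz, and let f* = min_{x ∈ B_d(0,R)} f(x). Let ε ∈ (0, 4LR], δ ∈ (0,1), and λ ≥ (2d·ln(4LR/ε) + 2·ln(1/δ))/ε. Then the Gibbs distribution D_f^λ on B_d(0,R) satisfies D_f^λ({x ∈ B_d(0,R) : f(x) ≥ f* + ε}) ≤ δ; in particular, a sample from D_f^λ is an ε-optimizer of f with probability at least 1 − δ. -/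
open Real MeasureTheory Metric

/-!
Points that are `ε`-far from optimal carry density at most `exp (-λ (f(x*) + ε))`, while on the
ball of radius `tR` around `(1 - t) x*`, with `t = ε / (4LR)`, the Lipschitz bound keeps the
density at least `exp (-λ (f(x*) + ε / 2))`. That ball lies in `B(0,R)` and has a `t ^ d` fraction
of its volume, so the bad mass is at most `exp (-λ ε / 2) / t ^ d` of the total, which the choice
of `λ` makes at most `δ`.
-/

section Gibbs

variable {X : Type*} [MeasurableSpace X] {μ : Measure X} {f : X → ℝ} {lam : ℝ}

theorem setIntegral_exp_neg_mul_le {s : Set X} {a : ℝ} (hlam : 0 ≤ lam) (hs : MeasurableSet s)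
    (hμs : μ s ≠ ⊤) (hint : IntegrableOn (fun x ↦ exp (-(lam * f x))) s μ)
    (hf : ∀ x ∈ s, a ≤ f x) :
    ∫ x in s, exp (-(lam * f x)) ∂μ ≤ exp (-(lam * a)) * μ.real s := by
  calc ∫ x in s, exp (-(lam * f x)) ∂μ ≤ ∫ _ in s, exp (-(lam * a)) ∂μ :=
        setIntegral_mono_on hint (integrableOn_const hμs) hs fun x hx ↦
          exp_le_exp.mpr (neg_le_neg (mul_le_mul_of_nonneg_left (hf x hx) hlam))
    _ = exp (-(lam * a)) * μ.real s := by rw [setIntegral_const, smul_eq_mul, mul_comm]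

theorem exp_neg_mul_mul_le_setIntegral {s : Set X} {b : ℝ} (hlam : 0 ≤ lam)
    (hs : MeasurableSet s) (hμs : μ s ≠ ⊤)
    (hint : IntegrableOn (fun x ↦ exp (-(lam * f x))) s μ) (hf : ∀ x ∈ s, f x ≤ b) :
    exp (-(lam * b)) * μ.real s ≤ ∫ x in s, exp (-(lam * f x)) ∂μ :=
  setIntegral_ge_of_const_le_real hs hμs
    (fun x hx ↦ exp_le_exp.mpr (neg_le_neg (mul_le_mul_of_nonneg_left (hf x hx) hlam))) hint

theorem setIntegral_exp_neg_mul_div_le {B S T : Set X} {b η δ : ℝ} (hlam : 0 ≤ lam) (hδ : 0 ≤ δ)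
    (hint : IntegrableOn (fun x ↦ exp (-(lam * f x))) B μ) (hμB : μ B ≠ ⊤)
    (hS : MeasurableSet S) (hT : MeasurableSet T) (hSB : S ⊆ B) (hTB : T ⊆ B)
    (hfS : ∀ x ∈ S, b + η ≤ f x) (hfT : ∀ x ∈ T, f x ≤ b)
    (hvol : exp (-(lam * η)) * μ.real B ≤ δ * μ.real T) :
    (∫ x in S, exp (-(lam * f x)) ∂μ) / ∫ x in B, exp (-(lam * f x)) ∂μ ≤ δ := by
  refine div_le_of_le_mul₀ (integral_nonneg fun _ ↦ (exp_pos _).le) hδ ?_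
  have hμS : μ S ≠ ⊤ := ne_top_of_le_ne_top hμB (measure_mono hSB)
  have hμT : μ T ≠ ⊤ := ne_top_of_le_ne_top hμB (measure_mono hTB)
  calc ∫ x in S, exp (-(lam * f x)) ∂μ
      ≤ exp (-(lam * (b + η))) * μ.real S :=
        setIntegral_exp_neg_mul_le hlam hS hμS (hint.mono_set hSB) hfS
    _ ≤ exp (-(lam * b)) * (exp (-(lam * η)) * μ.real B) := by
        rw [← mul_assoc, ← exp_add, mul_add, neg_add]
        gcongr
    _ ≤ exp (-(lam * b)) * (δ * μ.real T) := by gcongr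
    _ = δ * (exp (-(lam * b)) * μ.real T) := by ring
    _ ≤ δ * ∫ x in T, exp (-(lam * f x)) ∂μ := by
        gcongr
        exact exp_neg_mul_mul_le_setIntegral hlam hT hμT (hint.mono_set hTB) hfT
    _ ≤ δ * ∫ x in B, exp (-(lam * f x)) ∂μ := mul_le_mul_of_nonneg_left
        (setIntegral_mono_set hint (ae_of_all _ fun _ ↦ (exp_pos _).le) hTB.eventuallyLE) hδ

end Gibbs

section Ball

variable {E : Type*} [NormedAddCommGroup E] [NormedSpace ℝ E] {x : E} {R t : ℝ}

theorem closedBall_smul_subset_closedBall (hx : ‖x‖ ≤ R) (ht₁ : t ≤ 1) :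
    closedBall ((1 - t) • x) (t * R) ⊆ closedBall 0 R := by
  refine closedBall_subset_closedBall' ?_
  rw [dist_zero_right, norm_smul, Real.norm_eq_abs, abs_of_nonneg (sub_nonneg.mpr ht₁)]
  nlinarith

theorem dist_le_of_mem_closedBall_smul {y : E} (hx : ‖x‖ ≤ R) (ht₀ : 0 ≤ t)
    (hy : y ∈ closedBall ((1 - t) • x) (t * R)) : dist y x ≤ 2 * t * R := by
  have hcx : dist ((1 - t) • x) x ≤ t * R := by
    rw [dist_eq_norm, sub_smul, one_smul, sub_sub_cancel_left, norm_neg, norm_smul,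
      Real.norm_eq_abs, abs_of_nonneg ht₀]
    exact mul_le_mul_of_nonneg_left hx ht₀
  linarith [dist_triangle y ((1 - t) • x) x, mem_closedBall.mp hy]

theorem LipschitzOnWith.le_add_of_mem_closedBall_smul {f : E → ℝ} {K : NNReal} {y : E}
    (hf : LipschitzOnWith K f (closedBall 0 R)) (hx : ‖x‖ ≤ R) (ht₀ : 0 ≤ t) (ht₁ : t ≤ 1)
    (hy : y ∈ closedBall ((1 - t) • x) (t * R)) : f y ≤ f x + K * (2 * t * R) := by
  have hyB := closedBall_smul_subset_closedBall hx ht₁ hy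
  have hxB : x ∈ closedBall 0 R := mem_closedBall_zero_iff.mpr hx
  calc f y ≤ f x + dist (f y) (f x) := by
        linarith [le_abs_self (f y - f x), Real.dist_eq (f y) (f x)]
    _ ≤ f x + K * dist y x := by gcongr; exact hf.dist_le_mul y hyB x hxB
    _ ≤ f x + K * (2 * t * R) := by gcongr; exact dist_le_of_mem_closedBall_smul hx ht₀ hy

theorem addHaar_real_closedBall_mul [MeasurableSpace E] [BorelSpace E] [FiniteDimensional ℝ E]
    (μ : Measure E) [μ.IsAddHaarMeasure] (c : E) (ht : 0 ≤ t) (hR : 0 ≤ R) :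
    μ.real (closedBall c (t * R)) = t ^ Module.finrank ℝ E * μ.real (closedBall 0 R) := by
  rw [measureReal_def, Measure.addHaar_closedBall_mul μ c ht hR, ENNReal.toReal_mul,
    ENNReal.toReal_ofReal (by positivity), measureReal_def]

end Ball

theorem exp_neg_mul_half_le {d : ℕ} {ε δ r lam : ℝ} (hε : 0 < ε) (hδ : 0 < δ) (hr : 0 < r)
    (hlam : (2 * d * log r + 2 * log (1 / δ)) / ε ≤ lam) :
    exp (-(lam * (ε / 2))) ≤ δ * r⁻¹ ^ d := by
  rw [← exp_log (by positivity : 0 < δ * r⁻¹ ^ d), log_mul hδ.ne' (by positivity), log_pow,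
    log_inv, exp_le_exp]
  rw [one_div, log_inv, div_le_iff₀ hε] at hlam
  linarith

theorem sampling_implies_optimization_lipschitz_general (d : ℕ)
    (R : ℝ) (hR : 0 < R) (L : ℝ) (hL : 0 < L)
    (f : EuclideanSpace ℝ (Fin d) → ℝ)
    (hf : ∀ x ∈ Metric.closedBall (0 : EuclideanSpace ℝ (Fin d)) R,
      ∀ x' ∈ Metric.closedBall (0 : EuclideanSpace ℝ (Fin d)) R,
        |f x - f x'| ≤ L * ‖x - x'‖)
    (xstar : EuclideanSpace ℝ (Fin d))
    (hxstar : xstar ∈ Metric.closedBall (0 : EuclideanSpace ℝ (Fin d)) R)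
    (ε : ℝ) (hε : 0 < ε) (hε' : ε ≤ 4 * L * R)
    (δ : ℝ) (hδ : 0 < δ) (hδ' : δ < 1)
    (lam : ℝ)
    (hlam : (2 * (d : ℝ) * Real.log (4 * L * R / ε) + 2 * Real.log (1 / δ)) / ε ≤ lam) :
    (∫ x in {x ∈ Metric.closedBall (0 : EuclideanSpace ℝ (Fin d)) R |
        f xstar + ε ≤ f x}, Real.exp (-(lam * f x))) /
      (∫ x in Metric.closedBall (0 : EuclideanSpace ℝ (Fin d)) R,
        Real.exp (-(lam * f x))) ≤ δ := by
  set B := closedBall (0 : EuclideanSpace ℝ (Fin d)) R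
  set r := 4 * L * R / ε
  have hr : 1 ≤ r := (one_le_div hε).mpr hε'
  have hlam₀ : 0 ≤ lam := by
    have := log_nonneg hr
    have := log_nonneg (one_le_one_div hδ hδ'.le)
    exact le_trans (by positivity) hlam
  have hLip : LipschitzOnWith L.toNNReal f B := .of_dist_le_mul fun x hx y hy ↦ by
    simpa [Real.dist_eq, dist_eq_norm, hL.le] using hf x hx y hy
  have hint : IntegrableOn (fun x ↦ exp (-(lam * f x))) B :=
    (continuous_exp.comp_continuousOn (continuousOn_const.mul hLip.continuousOn).neg)
      |>.integrableOn_compact (isCompact_closedBall _ _)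
  have hS : MeasurableSet {x ∈ B | f xstar + ε ≤ f x} :=
    (hLip.continuousOn.preimage_isClosed_of_isClosed isClosed_closedBall isClosed_Ici)
      |>.measurableSet
  have hxR : ‖xstar‖ ≤ R := mem_closedBall_zero_iff.mp hxstar
  have ht₀ : 0 ≤ r⁻¹ := by positivity
  have ht₁ : r⁻¹ ≤ 1 := inv_le_one_of_one_le₀ hr
  have hfT : ∀ x ∈ closedBall ((1 - r⁻¹) • xstar) (r⁻¹ * R), f x ≤ f xstar + ε / 2 := by
    intro x hx
    have hε2 : L * (2 * r⁻¹ * R) = ε / 2 := by simp only [r]; field_simp; ring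
    simpa [hL.le, hε2] using hLip.le_add_of_mem_closedBall_smul hxR ht₀ ht₁ hx
  have hvol : exp (-(lam * (ε / 2))) * volume.real B ≤
      δ * volume.real (closedBall ((1 - r⁻¹) • xstar) (r⁻¹ * R)) := by
    rw [addHaar_real_closedBall_mul _ _ ht₀ hR.le, finrank_euclideanSpace_fin, ← mul_assoc]
    exact mul_le_mul_of_nonneg_right (exp_neg_mul_half_le hε hδ (by positivity) hlam)
      measureReal_nonneg
  exact setIntegral_exp_neg_mul_div_le hlam₀ hδ.le hint measure_closedBall_lt_top.ne hS
    measurableSet_closedBall (Set.sep_subset _ _) (closedBall_smul_subset_closedBall hxR ht₁)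
    (fun x hx ↦ by linarith [hx.2]) hfT hvol

/-- Sampling implies optimization, Lipschitz case: if `f` is
`L`-Lipschitz on `B(0,R)` with minimum `f* = f xstar`, `ε ∈ (0, 4LR]` and
`λ ≥ (2d·ln(4LR/ε) + 2·ln(1/δ))/ε`, then the Gibbs distribution of `f` on `B(0,R)`
puts mass at most `δ` on the set of points that are not `ε`-optimizers. -/
theorem sampling_implies_optimization_lipschitz (d : ℕ) (hd : 1 ≤ d)
    (R : ℝ) (hR : 0 < R) (L : ℝ) (hL : 0 < L)
    (f : EuclideanSpace ℝ (Fin d) → ℝ)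
    (hf : ∀ x ∈ Metric.closedBall (0 : EuclideanSpace ℝ (Fin d)) R,
      ∀ x' ∈ Metric.closedBall (0 : EuclideanSpace ℝ (Fin d)) R,
        |f x - f x'| ≤ L * ‖x - x'‖)
    (xstar : EuclideanSpace ℝ (Fin d))
    (hxstar : xstar ∈ Metric.closedBall (0 : EuclideanSpace ℝ (Fin d)) R)
    (hmin : ∀ x ∈ Metric.closedBall (0 : EuclideanSpace ℝ (Fin d)) R, f xstar ≤ f x)
    (ε : ℝ) (hε : 0 < ε) (hε' : ε ≤ 4 * L * R)
    (δ : ℝ) (hδ : 0 < δ) (hδ' : δ < 1)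
    (lam : ℝ)
    (hlam : (2 * (d : ℝ) * Real.log (4 * L * R / ε) + 2 * Real.log (1 / δ)) / ε ≤ lam) :
    (∫ x in {x ∈ Metric.closedBall (0 : EuclideanSpace ℝ (Fin d)) R |
        f xstar + ε ≤ f x}, Real.exp (-(lam * f x))) /
      (∫ x in Metric.closedBall (0 : EuclideanSpace ℝ (Fin d)) R,
        Real.exp (-(lam * f x))) ≤ δ :=
  sampling_implies_optimization_lipschitz_general d R hR L hL f hf xstar hxstar ε hε hε' δ hδ hδ'
    lam hlam
end

section
/- Let d ≥ 1, R > 0, β > 0, let f : B_d(0,R) → ℝ be β-smooth (its gradient is β-Lipschitz), and suppose its minimum f* is attained at an interior point x* of B_d(0,R) with ∇f(x*) = 0. Let ε > 0 and δ ∈ (0,1) be such that the closed ball B(x*, √(ε/β)) is contained in B_d(0,R), and let λ ≥ (d·ln(βR²/ε) + 2·ln(1/δ))/ε. Then the Gibbs distribution D_f^λ on B_d(0,R) satisfies D_f^λ({x ∈ B_d(0,R) : f(x) ≥ f* + ε}) ≤ δ. -/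
/-!
Put `r = √(ε/β)`. Since `∇f(x*) = 0` and the gradient is `β`-Lipschitz, `f ≤ f* + ε/2` on
`B(x*, r) ⊆ B(0, R)`, so the Gibbs weight `exp(-λf)` is at least `exp(-λ(f* + ε/2))` there, while
it is at most `exp(-λ(f* + ε))` on `{f ≥ f* + ε}`. Comparing volumes, the mass of that set is at
most `exp(-λε/2) (R/r)^d = exp(-λε/2) (βR²/ε)^(d/2)`, which the choice of `λ` makes `≤ δ`.
-/

open Real MeasureTheory Metric

theorem le_add_mul_norm_sub_sq_of_norm_fderiv_le {E : Type*} [NormedAddCommGroup E]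
    [NormedSpace ℝ E] {f : E → ℝ} {β : ℝ} {x₀ : E} (hf : Differentiable ℝ f)
    (hgrad : ∀ y, ‖fderiv ℝ f y‖ ≤ β * ‖y - x₀‖) (x : E) :
    f x ≤ f x₀ + β / 2 * ‖x - x₀‖ ^ 2 := by
  set v := x - x₀
  have hline (t : ℝ) :
      HasDerivAt (fun t : ℝ ↦ f (x₀ + t • v)) (fderiv ℝ f (x₀ + t • v) v) t := by
    refine (hf _).hasFDerivAt.comp_hasDerivAt t ?_
    simpa using ((hasDerivAt_id t).smul_const v).const_add x₀
  have hslope {t : ℝ} (ht : 0 < t) : fderiv ℝ f (x₀ + t • v) v ≤ β * ‖v‖ ^ 2 * t :=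
    calc fderiv ℝ f (x₀ + t • v) v ≤ ‖fderiv ℝ f (x₀ + t • v)‖ * ‖v‖ :=
          (le_abs_self _).trans ((fderiv ℝ f (x₀ + t • v)).le_opNorm v)
      _ ≤ β * ‖t • v‖ * ‖v‖ := by
          gcongr; simpa using hgrad (x₀ + t • v)
      _ = β * ‖v‖ ^ 2 * t := by rw [norm_smul, norm_of_nonneg ht.le]; ring
  have hmono :
      MonotoneOn (fun t : ℝ ↦ β / 2 * ‖v‖ ^ 2 * t ^ 2 - f (x₀ + t • v)) (Set.Ici 0) := by
    have hderiv (t : ℝ) : HasDerivAt (fun t : ℝ ↦ β / 2 * ‖v‖ ^ 2 * t ^ 2 - f (x₀ + t • v))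
        (β * ‖v‖ ^ 2 * t - fderiv ℝ f (x₀ + t • v) v) t :=
      (((hasDerivAt_pow 2 t).const_mul (β / 2 * ‖v‖ ^ 2)).sub (hline t)).congr_deriv
        (by norm_num; ring)
    refine monotoneOn_of_hasDerivWithinAt_nonneg (convex_Ici 0)
      (fun t _ ↦ (hderiv t).continuousAt.continuousWithinAt)
      (fun t _ ↦ (hderiv t).hasDerivWithinAt) fun t ht ↦ ?_
    rw [interior_Ici] at ht
    exact sub_nonneg.2 (hslope ht)
  have := hmono Set.self_mem_Ici (Set.mem_Ici.2 zero_le_one) zero_le_one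
  simp only [zero_smul, add_zero, one_smul, add_sub_cancel, v] at this
  linarith

theorem le_add_half_of_mem_closedBall_sqrt {E : Type*} [NormedAddCommGroup E]
    [NormedSpace ℝ E] {f : E → ℝ} {β ε : ℝ} {x₀ x : E} (hβ : 0 < β) (hε : 0 ≤ ε)
    (hf : Differentiable ℝ f) (hgrad : ∀ y, ‖fderiv ℝ f y‖ ≤ β * ‖y - x₀‖)
    (hx : x ∈ closedBall x₀ √(ε / β)) :
    f x ≤ f x₀ + ε / 2 := by
  have hx : ‖x - x₀‖ ^ 2 ≤ ε / β := by
    rw [← sq_sqrt (div_nonneg hε hβ.le)]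
    exact pow_le_pow_left₀ (norm_nonneg _) (mem_closedBall_iff_norm.1 hx) 2
  have := le_add_mul_norm_sub_sq_of_norm_fderiv_le hf hgrad x
  calc f x ≤ f x₀ + β / 2 * (ε / β) := by nlinarith
    _ = f x₀ + ε / 2 := by field_simp

theorem le_of_closedBall_subset_closedBall {E : Type*} [NormedAddCommGroup E] [NormedSpace ℝ E]
    [Nontrivial E] {x y : E} {r R : ℝ} (hr : 0 ≤ r)
    (h : closedBall x r ⊆ closedBall y R) : r ≤ R := by
  have hR : 0 ≤ R := by simpa using dist_nonneg.trans (h (mem_closedBall_self hr))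
  have := diam_mono h isBounded_closedBall
  rw [diam_closedBall_eq x hr, diam_closedBall_eq y hR] at this
  linarith

theorem Measure.addHaar_real_closedBall_div_addHaar_real_closedBall {E : Type*}
    [NormedAddCommGroup E] [NormedSpace ℝ E] [MeasurableSpace E] [BorelSpace E]
    [FiniteDimensional ℝ E] (μ : Measure E) [μ.IsAddHaarMeasure] (x y : E) {r R : ℝ}
    (hr : 0 < r) (hR : 0 ≤ R) :
    μ.real (closedBall y R) / μ.real (closedBall x r) = (R / r) ^ Module.finrank ℝ E := by
  have hunit : 0 < μ.real (closedBall 0 1) :=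
    ENNReal.toReal_pos (measure_closedBall_pos μ 0 one_pos).ne' measure_closedBall_lt_top.ne
  rw [Measure.addHaar_real_closedBall' μ y hR, Measure.addHaar_real_closedBall' μ x hr.le,
    div_pow]
  field_simp

theorem setIntegral_div_setIntegral_le {α : Type*} [MeasurableSpace α] {μ : Measure α}
    {g : α → ℝ} {s t u : Set α} {a b : ℝ} (hs : MeasurableSet s) (ht : MeasurableSet t)
    (hsu : s ⊆ u) (htu : t ⊆ u) (hμu : μ u ≠ ⊤) (hμt : 0 < μ t) (hg : IntegrableOn g u μ)
    (hg₀ : 0 ≤ g) (hgs : ∀ x ∈ s, g x ≤ a) (hgt : ∀ x ∈ t, b ≤ g x) (ha : 0 ≤ a) (hb : 0 < b) :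
    (∫ x in s, g x ∂μ) / (∫ x in u, g x ∂μ) ≤ a / b * (μ.real u / μ.real t) := by
  have hμs : μ s ≠ ⊤ := ne_top_of_le_ne_top hμu (measure_mono hsu)
  have hμt' : μ t ≠ ⊤ := ne_top_of_le_ne_top hμu (measure_mono htu)
  have hnum : ∫ x in s, g x ∂μ ≤ a * μ.real u :=
    calc ∫ x in s, g x ∂μ ≤ ∫ _ in s, a ∂μ :=
          setIntegral_mono_on (hg.mono_set hsu) (integrableOn_const hμs) hs hgs
      _ = a * μ.real s := by rw [setIntegral_const, smul_eq_mul, mul_comm]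
      _ ≤ a * μ.real u := by gcongr
  have hden : b * μ.real t ≤ ∫ x in u, g x ∂μ :=
    (setIntegral_ge_of_const_le_real ht hμt' hgt (hg.mono_set htu)).trans
      (setIntegral_mono_set hg (.of_forall hg₀) (.of_forall htu))
  rw [div_mul_div_comm]
  exact div_le_div₀ (mul_nonneg ha measureReal_nonneg) hnum
    (mul_pos hb (ENNReal.toReal_pos hμt.ne' hμt')) hden

theorem exp_neg_half_mul_pow_le {n : ℕ} {ρ δ s : ℝ} (hρ : 0 < ρ) (hδ : 0 < δ)
    (h : n * log (ρ ^ 2) + 2 * log (1 / δ) ≤ s) : exp (-(s / 2)) * ρ ^ n ≤ δ := by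
  rw [log_pow, one_div, log_inv] at h
  calc exp (-(s / 2)) * ρ ^ n = exp (-(s / 2) + n * log ρ) := by
        rw [exp_add, ← log_pow, exp_log (pow_pos hρ n)]
    _ ≤ exp (log δ) := exp_le_exp.2 (by push_cast at h; linarith)
    _ = δ := exp_log hδ

theorem sampling_implies_optimization_smooth_general (d : ℕ) (hd : 1 ≤ d)
    (R : ℝ) (β : ℝ) (hβ : 0 < β)
    (f : EuclideanSpace ℝ (Fin d) → ℝ)
    (hdiff : Differentiable ℝ f)
    (hsmooth : ∀ x x' : EuclideanSpace ℝ (Fin d),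
      ‖fderiv ℝ f x - fderiv ℝ f x'‖ ≤ β * ‖x - x'‖)
    (xstar : EuclideanSpace ℝ (Fin d))
    (hcrit : fderiv ℝ f xstar = 0)
    (ε : ℝ) (hε : 0 < ε)
    (hball : Metric.closedBall xstar (Real.sqrt (ε / β)) ⊆
      Metric.closedBall (0 : EuclideanSpace ℝ (Fin d)) R)
    (δ : ℝ) (hδ : 0 < δ) (hδ' : δ < 1)
    (lam : ℝ)
    (hlam : ((d : ℝ) * Real.log (β * R ^ 2 / ε) + 2 * Real.log (1 / δ)) / ε ≤ lam) :
    (∫ x in {x ∈ Metric.closedBall (0 : EuclideanSpace ℝ (Fin d)) R |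
        f xstar + ε ≤ f x}, Real.exp (-(lam * f x))) /
      (∫ x in Metric.closedBall (0 : EuclideanSpace ℝ (Fin d)) R,
        Real.exp (-(lam * f x))) ≤ δ := by
  have : NeZero d := ⟨by omega⟩
  set r := √(ε / β)
  have hr : 0 < r := sqrt_pos.2 (div_pos hε hβ)
  have hrR : r ≤ R := le_of_closedBall_subset_closedBall hr.le hball
  have hlam' : d * log ((R / r) ^ 2) + 2 * log (1 / δ) ≤ lam * ε := by
    rwa [div_pow, sq_sqrt (div_pos hε hβ).le, div_div_eq_mul_div, mul_comm (R ^ 2) β,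
      ← div_le_iff₀ hε]
  have hlam₀ : 0 ≤ lam := by
    have : 0 ≤ log ((R / r) ^ 2) := log_nonneg (one_le_pow₀ ((one_le_div hr).2 hrR))
    have : 0 < log (1 / δ) := log_pos (one_lt_one_div hδ hδ')
    nlinarith
  have hnear (x) (hx : x ∈ closedBall xstar r) : f x ≤ f xstar + ε / 2 :=
    le_add_half_of_mem_closedBall_sqrt hβ hε.le hdiff
      (fun y ↦ by simpa [hcrit] using hsmooth y xstar) hx
  have hcont : Continuous fun x ↦ exp (-(lam * f x)) := by have := hdiff.continuous; fun_prop
  calc _ ≤ exp (-(lam * (f xstar + ε))) / exp (-(lam * (f xstar + ε / 2))) *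
        (volume.real (closedBall 0 R) / volume.real (closedBall xstar r)) :=
        setIntegral_div_setIntegral_le
          (measurableSet_closedBall.inter
            (measurableSet_le measurable_const hdiff.continuous.measurable))
          measurableSet_closedBall (fun x hx ↦ hx.1) hball measure_closedBall_lt_top.ne
          (measure_closedBall_pos volume xstar hr)
          (hcont.continuousOn.integrableOn_compact (isCompact_closedBall 0 R))
          (fun x ↦ (exp_pos _).le)
          (fun x hx ↦ exp_le_exp.2 (by nlinarith [show f xstar + ε ≤ f x from hx.2]))
          (fun x hx ↦ exp_le_exp.2 (by nlinarith [hnear x hx])) (exp_pos _).le (exp_pos _)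
    _ = exp (-(lam * ε / 2)) * (R / r) ^ d := by
        rw [← exp_sub, Measure.addHaar_real_closedBall_div_addHaar_real_closedBall _ _ _ hr
          (hr.le.trans hrR), finrank_euclideanSpace_fin]
        ring_nf
    _ ≤ δ := exp_neg_half_mul_pow_le (div_pos (hr.trans_le hrR) hr) hδ hlam'

/-- Sampling implies optimization, smooth case: if `f` is
differentiable with `β`-Lipschitz gradient, its minimum over `B(0,R)` is attained at
an interior critical point `x*`, the ball `B(x*, √(ε/β))` is contained in `B(0,R)`,
and `λ ≥ (d·ln(βR²/ε) + 2·ln(1/δ))/ε`, then the Gibbs distribution of `f` on `B(0,R)`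
puts mass at most `δ` on `{f ≥ f* + ε}`. -/
theorem sampling_implies_optimization_smooth (d : ℕ) (hd : 1 ≤ d)
    (R : ℝ) (hR : 0 < R) (β : ℝ) (hβ : 0 < β)
    (f : EuclideanSpace ℝ (Fin d) → ℝ)
    (hdiff : Differentiable ℝ f)
    (hsmooth : ∀ x x' : EuclideanSpace ℝ (Fin d),
      ‖fderiv ℝ f x - fderiv ℝ f x'‖ ≤ β * ‖x - x'‖)
    (xstar : EuclideanSpace ℝ (Fin d)) (hxstar : ‖xstar‖ < R)
    (hcrit : fderiv ℝ f xstar = 0)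
    (hmin : ∀ x ∈ Metric.closedBall (0 : EuclideanSpace ℝ (Fin d)) R, f xstar ≤ f x)
    (ε : ℝ) (hε : 0 < ε)
    (hball : Metric.closedBall xstar (Real.sqrt (ε / β)) ⊆
      Metric.closedBall (0 : EuclideanSpace ℝ (Fin d)) R)
    (δ : ℝ) (hδ : 0 < δ) (hδ' : δ < 1)
    (lam : ℝ)
    (hlam : ((d : ℝ) * Real.log (β * R ^ 2 / ε) + 2 * Real.log (1 / δ)) / ε ≤ lam) :
    (∫ x in {x ∈ Metric.closedBall (0 : EuclideanSpace ℝ (Fin d)) R |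
        f xstar + ε ≤ f x}, Real.exp (-(lam * f x))) /
      (∫ x in Metric.closedBall (0 : EuclideanSpace ℝ (Fin d)) R,
        Real.exp (-(lam * f x))) ≤ δ :=
  sampling_implies_optimization_smooth_general d hd R β hβ f hdiff hsmooth xstar hcrit ε hε hball δ
    hδ hδ' lam hlam
end
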